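/- The composition tableau T(∞) is semistandard for the order ≼: its entries strictly ≼-increase down each column, weakly ≼-decrease along each row on going from left to right, and no column of T(∞) contains a gap (an empty box with a filled box above it and a filled box below it in the same column). -/

import Mathlib

open scoped Classical

/-- height of column `j` of the diagram (columns numbered from 1). -/
def hgt (c : List ℕ) (j : ℕ) : ℕ := c.getD (j - 1) 0

/-- number of boxes in the columns strictly to the left of column `j`. -/
def off (c : List ℕ) (j : ℕ) : ℕ := (c.take (j - 1)).sum

/-- `(i, j)` (row `i`, column `j`) is a box of the diagram `D`. -/
def IsBox (c : List ℕ) (i j : ℕ) : Prop :=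
  1 ≤ j ∧ j ≤ c.length ∧ 1 ≤ i ∧ i ≤ hgt c j

/-- the entry of the box `(i, j)` in the tableau `T`. -/
def Tentry (c : List ℕ) (i j : ℕ) : ℕ := off c j + i

/-- the column of the box of `D` carrying entry `m` in `T`. -/
noncomputable def colOf (c : List ℕ) (m : ℕ) : ℕ := sInf {j | m ≤ (c.take j).sum}

/-- the row of the box of `D` carrying entry `m` in `T`. -/
noncomputable def rowOf (c : List ℕ) (m : ℕ) : ℕ := m - off c (colOf c m)

/-- the total order `≼` on entries: increasing down columns, then from right to left. -/
def ple (c : List ℕ) (a b : ℕ) : Prop :=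
  colOf c b < colOf c a ∨ (colOf c a = colOf c b ∧ a ≤ b)

/-- the strict version of `≼`. -/
def plt (c : List ℕ) (a b : ℕ) : Prop :=
  colOf c b < colOf c a ∨ (colOf c a = colOf c b ∧ a < b)

/-- column `j` has a left neighbour in `D`. -/
def HasLeftNb (c : List ℕ) (j : ℕ) : Prop :=
  ∃ i, 1 ≤ i ∧ i < j ∧ hgt c i = hgt c j ∧
    ∀ i', i < i' → i' < j → hgt c i' ≠ hgt c j

/-- the `j`-th column of the tableau `T`, rows to optional entries. -/
def Tcol (c : List ℕ) (j : ℕ) : ℕ → Option ℕ := fun i =>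
  if 1 ≤ i ∧ i ≤ hgt c j then some (Tentry c i j) else none

/-- one step of the propagation rule building `T(∞)`: the entry (if any) in row `t`
of column `j - 1` of `T(∞)` (given by `prev`) is propagated into the partially
built column `j` (given by `cur`). -/
noncomputable def propStep (c : List ℕ) (j : ℕ) (prev : ℕ → Option ℕ)
    (cur : ℕ → Option ℕ) (t : ℕ) : ℕ → Option ℕ :=
  match prev t with
  | none => cur
  | some l =>
    if hgt c j = t then
      if HasLeftNb c j ∧ cur (t + 1) = none then
        Function.update cur (t + 1) (some l)
      else cur
    else
      if cur t = none then Function.update cur t (some l) else cur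

/-- the `j`-th column of the composition tableau `T(∞)`. -/
noncomputable def TinfCol (c : List ℕ) : ℕ → ℕ → Option ℕ
  | 0 => fun _ => none
  | 1 => Tcol c 1
  | j + 2 =>
      (List.range (c.sum + 2)).foldl
        (propStep c (j + 2) (TinfCol c (j + 1))) (Tcol c (j + 2))

/-- labels of lines: `1` or `∗`. -/
inductive Lab : Type
  | one : Lab
  | star : Lab
deriving DecidableEq

/-- maximal height among the columns `1, …, j - 1`. -/
def maxHgt (c : List ℕ) (j : ℕ) : ℕ := (c.take (j - 1)).foldr max 0

/-- the maximal column height of the diagram `D`. -/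
def maxH (c : List ℕ) : ℕ := c.foldr max 0

/-- `LineB c a i j lab` : the line family `ℓ(D)` contains a line labelled `lab`
whose left end-point is the box of `D` carrying entry `a` in `T` and whose right
end-point is the box `(i, j)` (row `i` of column `C_j`). -/
def LineB (c : List ℕ) (a i j : ℕ) (lab : Lab) : Prop :=
  2 ≤ j ∧ j ≤ c.length ∧ 1 ≤ i ∧
    (match lab with
     | Lab.one =>
         (maxHgt c j < hgt c j ∧ i ≤ maxHgt c j + 1 ∧ TinfCol c (j - 1) i = some a)
       ∨ (hgt c j ≤ maxHgt c j ∧ i + 1 ≤ hgt c j ∧ TinfCol c (j - 1) i = some a)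
       ∨ (hgt c j ≤ maxHgt c j ∧ i = hgt c j ∧
           ¬(∃ j', 1 ≤ j' ∧ j' < j ∧ hgt c j' = hgt c j) ∧
           TinfCol c (j - 1) i = some a)
       ∨ (hgt c j ≤ maxHgt c j ∧ i = hgt c j ∧
           (∃ j', 1 ≤ j' ∧ j' < j ∧ hgt c j' = hgt c j) ∧
           TinfCol c (j - 1) (i + 1) = some a)
     | Lab.star =>
         hgt c j ≤ maxHgt c j ∧ i = hgt c j ∧
           (∃ j', 1 ≤ j' ∧ j' < j ∧ hgt c j' = hgt c j) ∧
           TinfCol c (j - 1) i = some a)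

/-- `LineE c a b lab` : `ℓ(D)` contains a line labelled `lab` joining the box of `D`
carrying entry `a` in `T` (on the left) to the box carrying entry `b` (on the right). -/
def LineE (c : List ℕ) (a b : ℕ) (lab : Lab) : Prop :=
  ∃ i j, LineB c a i j lab ∧ b = Tentry c i j

/-- the box `(i, j)` of `D` is right extremal relative to `ℓ(D)`. -/
def RExt (c : List ℕ) (i j : ℕ) : Prop :=
  IsBox c i j ∧ ∀ i' j', ¬ LineB c (Tentry c i j) i' j' Lab.one

/-- `c` is a composition of `n`. -/
def IsComposition (c : List ℕ) (n : ℕ) : Prop :=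
  c.sum = n ∧ ∀ x ∈ c, 0 < x

/-! Column `j` of `T(∞)` has a closed form: rows `1, …, c_j` carry the entries of `C_j` in `T`,
and below them sits column `j - 1` of `T(∞)`, except that when `C_j` has a left neighbour the
entry in row `c_j` of column `j - 1` drops to row `c_j + 1`, stopping the entry that would have
gone there. Induction on `j` then shows that every column is filled without gaps from the top,
is strictly `≼`-increasing (the entries below row `c_j` come from columns left of `C_j`, hence
are `≼`-larger), and that an entry of column `j` in row `i` whose column in `T` is weakly left of
`C_{j₀}`, `j₀ ≤ j`, already occurs in column `j₀` in a row `≤ i`; the last property gives the weak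
`≼`-decrease along rows. -/

section Tableau

variable {c : List ℕ} {j : ℕ}

lemma sum_take_eq_off_add_hgt (h1 : 1 ≤ j) (h2 : j ≤ c.length) :
    (c.take j).sum = off c j + hgt c j := by
  obtain ⟨k, rfl⟩ : ∃ k, j = k + 1 := ⟨j - 1, by omega⟩
  rw [List.sum_take_succ c k (by omega)]
  simp [off, hgt, List.getD_eq_getElem?_getD, List.getElem?_eq_getElem (show k < c.length by omega)]

lemma one_le_hgt (hpos : ∀ x ∈ c, 0 < x) (h1 : 1 ≤ j) (h2 : j ≤ c.length) : 1 ≤ hgt c j := by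
  have hk : j - 1 < c.length := by omega
  simpa [hgt, List.getD_eq_getElem?_getD, List.getElem?_eq_getElem hk, Nat.one_le_iff_ne_zero,
    Nat.pos_iff_ne_zero] using hpos _ (List.getElem_mem hk)

lemma colOf_Tentry {i : ℕ} (hi1 : 1 ≤ i) (hi2 : i ≤ hgt c j) (hj1 : 1 ≤ j) (hj2 : j ≤ c.length) :
    colOf c (Tentry c i j) = j := by
  have hmem : Tentry c i j ≤ (c.take j).sum := by
    rw [sum_take_eq_off_add_hgt hj1 hj2, Tentry]; omega
  refine le_antisymm (Nat.sInf_le hmem) (le_csInf ⟨j, hmem⟩ fun j' hj' => ?_)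
  by_contra! hlt
  have := List.monotone_sum_take c (show j' ≤ j - 1 by omega)
  simp only [Set.mem_ofPred_eq, Tentry, off] at hj' this
  omega

end Tableau

def FilledUpTo (col : ℕ → Option ℕ) (m : ℕ) : Prop :=
  ∀ i, (col i).isSome ↔ 1 ≤ i ∧ i ≤ m

lemma FilledUpTo.eq_none {col : ℕ → Option ℕ} {m i : ℕ} (h : FilledUpTo col m)
    (hi : ¬(1 ≤ i ∧ i ≤ m)) : col i = none := by
  simpa [← h i] using hi

lemma FilledUpTo.succ_eq_none {col : ℕ → Option ℕ} {m i : ℕ} (h : FilledUpTo col m)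
    (hi : 1 ≤ i) (hnone : col i = none) : col (i + 1) = none := by
  have := h i
  exact h.eq_none (by simp_all; omega)

/-- Column `j` of `T(∞)` in closed form, `prev` being column `j - 1`: when `C_j` has a left
neighbour, the entry of row `hgt c j` of `prev` moves down to row `hgt c j + 1`, and the entry
it displaces there is stopped. -/
noncomputable def propagatedCol (c : List ℕ) (j : ℕ) (prev : ℕ → Option ℕ) : ℕ → Option ℕ :=
  fun i =>
    if 1 ≤ i ∧ i ≤ hgt c j then some (Tentry c i j)
    else if i = hgt c j + 1 ∧ HasLeftNb c j then prev (hgt c j)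
    else prev i

/-- The construction of column `j` after rows `0, …, t - 1` of `prev` have been inserted. Row
`hgt c j + 1` is already final at `t = hgt c j + 1`: a shifted entry is written one step early. -/
noncomputable def propagatedColUpTo (c : List ℕ) (j : ℕ) (prev : ℕ → Option ℕ) (t : ℕ) :
    ℕ → Option ℕ := fun i =>
  if i < t ∨ (i = t ∧ t = hgt c j + 1 ∧ HasLeftNb c j) then propagatedCol c j prev i
  else Tcol c j i

section Propagation

variable {c : List ℕ} {j m : ℕ} {prev : ℕ → Option ℕ}

lemma propagatedCol_eq_Tcol_of_le {i : ℕ} (h1 : 1 ≤ i) (h2 : i ≤ hgt c j) :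
    propagatedCol c j prev i = Tcol c j i := by
  simp [propagatedCol, Tcol, h1, h2]

lemma propagatedCol_eq_Tcol_of_eq_none {i : ℕ} (hi : ¬(i = hgt c j + 1 ∧ HasLeftNb c j))
    (hp : prev i = none) : propagatedCol c j prev i = Tcol c j i := by
  unfold propagatedCol Tcol
  split_ifs <;> simp_all

lemma propagatedColUpTo_zero : propagatedColUpTo c j prev 0 = Tcol c j := by
  funext i
  simp [propagatedColUpTo]

lemma propagatedColUpTo_succ_apply (t i : ℕ) :
    propagatedColUpTo c j prev (t + 1) i =
      if i = t ∨ (i = t + 1 ∧ t = hgt c j ∧ HasLeftNb c j) then propagatedCol c j prev i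
      else propagatedColUpTo c j prev t i := by
  unfold propagatedColUpTo
  by_cases hnb : HasLeftNb c j <;> simp only [hnb, and_true, and_false, or_false] <;>
    split_ifs <;> first | rfl | (exfalso; omega)

lemma propagatedColUpTo_self (t : ℕ) :
    propagatedColUpTo c j prev t t =
      if t = hgt c j + 1 ∧ HasLeftNb c j then propagatedCol c j prev t else Tcol c j t := by
  simp [propagatedColUpTo]

lemma propagatedColUpTo_self_of_le {t : ℕ} (h1 : 1 ≤ t) (h2 : t ≤ hgt c j) :
    propagatedColUpTo c j prev t t = propagatedCol c j prev t := by
  rw [propagatedColUpTo_self, if_neg (by omega), propagatedCol_eq_Tcol_of_le h1 h2]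

lemma propagatedColUpTo_succ_self (t : ℕ) :
    propagatedColUpTo c j prev t (t + 1) = Tcol c j (t + 1) := by
  simp [propagatedColUpTo]

lemma propStep_propagatedColUpTo_of_eq_none {t : ℕ} (hpt : prev t = none) :
    propStep c j prev (propagatedColUpTo c j prev t) t = propagatedColUpTo c j prev (t + 1) := by
  funext i
  rw [propagatedColUpTo_succ_apply]
  simp only [propStep, hpt]
  split_ifs with hi
  · rcases hi with rfl | ⟨rfl, rfl, hnb⟩
    · rw [propagatedColUpTo_self]
      split_ifs with hshift
      · rfl
      · exact (propagatedCol_eq_Tcol_of_eq_none hshift hpt).symm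
    · simp [propagatedColUpTo_succ_self, propagatedCol, Tcol, hnb, hpt]
  · rfl

lemma propStep_propagatedColUpTo_hgt (hH : 1 ≤ hgt c j) {l : ℕ} (hpt : prev (hgt c j) = some l) :
    propStep c j prev (propagatedColUpTo c j prev (hgt c j)) (hgt c j) =
      propagatedColUpTo c j prev (hgt c j + 1) := by
  funext i
  rw [propagatedColUpTo_succ_apply]
  simp only [propStep, hpt, if_true, true_and]
  by_cases hnb : HasLeftNb c j
  · rw [if_pos ⟨hnb, by simp [propagatedColUpTo_succ_self, Tcol]⟩, Function.update_apply]
    rcases eq_or_ne i (hgt c j + 1) with rfl | h1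
    · simp [propagatedCol, hnb, hpt]
    rw [if_neg h1]
    split_ifs with h2
    · obtain rfl : i = hgt c j := by tauto
      exact propagatedColUpTo_self_of_le hH le_rfl
    · rfl
  · rw [if_neg (fun h => hnb h.1)]
    split_ifs with h1
    · obtain rfl : i = hgt c j := by tauto
      exact propagatedColUpTo_self_of_le hH le_rfl
    · rfl

lemma propStep_propagatedColUpTo_of_ne_hgt (hH : 1 ≤ hgt c j) (hprev : FilledUpTo prev m)
    {t l : ℕ} (hpt : prev t = some l) (hHt : hgt c j ≠ t) :
    propStep c j prev (propagatedColUpTo c j prev t) t = propagatedColUpTo c j prev (t + 1) := by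
  have ht : 1 ≤ t ∧ t ≤ m := (hprev t).1 (by simp [hpt])
  have hi_t : ∀ {i}, i = t ∨ (i = t + 1 ∧ t = hgt c j ∧ HasLeftNb c j) → i = t := by omega
  funext i
  rw [propagatedColUpTo_succ_apply]
  simp only [propStep, hpt, if_neg hHt]
  split_ifs with hSt hi hi
  · obtain rfl := hi_t hi
    rw [Function.update_self]
    by_cases hle : 1 ≤ i ∧ i ≤ hgt c j
    · simp [propagatedColUpTo_self_of_le hle.1 hle.2, propagatedCol, hle] at hSt
    by_cases hsh : i = hgt c j + 1 ∧ HasLeftNb c j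
    · -- the shifted entry of row `hgt c j` is present, since `prev` has no gaps
      have : (prev (hgt c j)).isSome := (hprev _).2 ⟨hH, by omega⟩
      rw [propagatedColUpTo_self, if_pos hsh, propagatedCol, if_neg hle, if_pos hsh] at hSt
      simp [hSt] at this
    · simp [propagatedCol, hle, hsh, hpt]
  · rw [Function.update_of_ne (fun h => hi (Or.inl h))]
  · obtain rfl := hi_t hi
    rw [propagatedColUpTo_self] at hSt ⊢
    split_ifs with hsh
    · rfl
    · rw [if_neg hsh] at hSt
      have hle : 1 ≤ i ∧ i ≤ hgt c j := by by_contra h; simp [Tcol, h] at hSt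
      exact (propagatedCol_eq_Tcol_of_le hle.1 hle.2).symm
  · rfl

lemma propStep_propagatedColUpTo (hH : 1 ≤ hgt c j) (hprev : FilledUpTo prev m) (t : ℕ) :
    propStep c j prev (propagatedColUpTo c j prev t) t = propagatedColUpTo c j prev (t + 1) := by
  cases hpt : prev t with
  | none => exact propStep_propagatedColUpTo_of_eq_none hpt
  | some l =>
    rcases eq_or_ne (hgt c j) t with rfl | hHt
    · exact propStep_propagatedColUpTo_hgt hH hpt
    · exact propStep_propagatedColUpTo_of_ne_hgt hH hprev hpt hHt

lemma foldl_propStep_eq_propagatedCol (hH : 1 ≤ hgt c j) (hprev : FilledUpTo prev m) {N : ℕ}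
    (hN : hgt c j + 1 < N) (hmN : m < N) :
    (List.range N).foldl (propStep c j prev) (Tcol c j) = propagatedCol c j prev := by
  have hfold : ∀ t, (List.range t).foldl (propStep c j prev) (Tcol c j) =
      propagatedColUpTo c j prev t := by
    intro t
    induction t with
    | zero => exact propagatedColUpTo_zero.symm
    | succ t ih =>
      rw [List.range_succ, List.foldl_append, ih]
      exact propStep_propagatedColUpTo hH hprev t
  funext i
  rw [hfold, propagatedColUpTo]
  split_ifs with hi
  · rfl
  · have hiN : N ≤ i := by by_contra; exact hi (Or.inl (by omega))
    exact (propagatedCol_eq_Tcol_of_eq_none (fun h => by omega) (hprev.eq_none (by omega))).symm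

lemma filledUpTo_propagatedCol (hH : 1 ≤ hgt c j) (hprev : FilledUpTo prev m) :
    FilledUpTo (propagatedCol c j prev)
      (if HasLeftNb c j ∧ hgt c j ≤ m then max (hgt c j + 1) m else max (hgt c j) m) := by
  intro i
  have hp := hprev i
  have hpH := hprev (hgt c j)
  by_cases hnb : HasLeftNb c j <;> simp only [propagatedCol, hnb, and_true, and_false,
    true_and, false_and, if_false] <;> split_ifs <;> simp_all <;> omega

lemma propagatedCol_eq_some (hprev : FilledUpTo prev m) {i a : ℕ}
    (h : propagatedCol c j prev i = some a) :
    (1 ≤ i ∧ i ≤ hgt c j ∧ a = Tentry c i j) ∨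
      (hgt c j < i ∧ ∃ i₀ ≤ i, (i₀ = i ∨ i = hgt c j + 1) ∧ prev i₀ = some a) := by
  unfold propagatedCol at h
  split_ifs at h with h1 h2
  · exact Or.inl ⟨h1.1, h1.2, (Option.some.inj h).symm⟩
  · exact Or.inr ⟨by omega, hgt c j, by omega, Or.inr h2.1, h⟩
  · have : 1 ≤ i := ((hprev i).1 (by simp [h])).1
    exact Or.inr ⟨by omega, i, le_rfl, Or.inl rfl, h⟩

variable (hj1 : 1 ≤ j) (hjl : j ≤ c.length) (hprev : FilledUpTo prev m)
include hj1 hjl hprev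

lemma colOf_le_of_propagatedCol_eq_some (hcol : ∀ i a, prev i = some a → colOf c a < j)
    {i a : ℕ} (h : propagatedCol c j prev i = some a) : colOf c a ≤ j := by
  rcases propagatedCol_eq_some hprev h with ⟨h1, h2, rfl⟩ | ⟨-, i₀, -, -, hp⟩
  · exact (colOf_Tentry h1 h2 hj1 hjl).le
  · exact (hcol i₀ a hp).le

lemma plt_of_propagatedCol_eq_some (hcol : ∀ i a, prev i = some a → colOf c a < j)
    (hplt : ∀ {i i' a b}, i < i' → prev i = some a → prev i' = some b → plt c a b)
    {i i' a b : ℕ} (hii : i < i') (ha : propagatedCol c j prev i = some a)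
    (hb : propagatedCol c j prev i' = some b) : plt c a b := by
  rcases propagatedCol_eq_some hprev ha with ⟨ha1, ha2, rfl⟩ | ⟨hia, i₀, hi₀, hi₀a, hpa⟩ <;>
    rcases propagatedCol_eq_some hprev hb with ⟨hb1, hb2, rfl⟩ | ⟨hib, i₀', hi₀', hi₀b, hpb⟩
  · refine Or.inr ⟨by rw [colOf_Tentry ha1 ha2 hj1 hjl, colOf_Tentry hb1 hb2 hj1 hjl], ?_⟩
    simp only [Tentry]
    omega
  · exact Or.inl ((hcol i₀' b hpb).trans_eq (colOf_Tentry ha1 ha2 hj1 hjl).symm)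
  · omega
  · exact hplt (by omega) hpa hpb

end Propagation

lemma TinfCol_add_two {c : List ℕ} {k m : ℕ} (hH : 1 ≤ hgt c (k + 2))
    (hprev : FilledUpTo (TinfCol c (k + 1)) m) (hHs : hgt c (k + 2) ≤ c.sum) (hms : m ≤ c.sum) :
    TinfCol c (k + 2) = propagatedCol c (k + 2) (TinfCol c (k + 1)) := by
  rw [TinfCol]
  exact foldl_propStep_eq_propagatedCol hH hprev (by omega) (by omega)

structure ColumnInvariant (c : List ℕ) (j m : ℕ) : Prop where
  le_sum_take : m ≤ (c.take j).sum
  filledUpTo : FilledUpTo (TinfCol c j) m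
  colOf_le : ∀ i a, TinfCol c j i = some a → colOf c a ≤ j
  plt_of_lt : ∀ {i i' a b}, i < i' → TinfCol c j i = some a → TinfCol c j i' = some b → plt c a b
  mem_of_le : ∀ j₀, 1 ≤ j₀ → j₀ ≤ j → ∀ i b, TinfCol c j i = some b →
    j₀ < colOf c b ∨ ∃ i₀ ≤ i, TinfCol c j₀ i₀ = some b

namespace ColumnInvariant

variable {c : List ℕ} {j j' m m' : ℕ}

lemma one (hl : 1 ≤ c.length) : ColumnInvariant c 1 (hgt c 1) := by
  have hT : ∀ i a, TinfCol c 1 i = some a → 1 ≤ i ∧ i ≤ hgt c 1 ∧ a = Tentry c i 1 := by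
    intro i a h
    simp only [TinfCol, Tcol] at h
    split_ifs at h with hi
    exact ⟨hi.1, hi.2, (Option.some.inj h).symm⟩
  refine ⟨?_, fun i => ?_, fun i a h => ?_, fun hii ha hb => ?_, fun j₀ hj₀ hj₀1 i b hb => ?_⟩
  · rw [sum_take_eq_off_add_hgt le_rfl hl]
    omega
  · simp [TinfCol, Tcol]
  · obtain ⟨h1, h2, rfl⟩ := hT i a h
    exact (colOf_Tentry h1 h2 le_rfl hl).le
  · obtain ⟨ha1, ha2, rfl⟩ := hT _ _ ha
    obtain ⟨hb1, hb2, rfl⟩ := hT _ _ hb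
    refine Or.inr ⟨by rw [colOf_Tentry ha1 ha2 le_rfl hl, colOf_Tentry hb1 hb2 le_rfl hl], ?_⟩
    simp only [Tentry]
    omega
  · obtain rfl : j₀ = 1 := by omega
    exact Or.inr ⟨i, le_rfl, hb⟩

lemma succ (hpos : ∀ x ∈ c, 0 < x) {k : ℕ} (hk : k + 2 ≤ c.length)
    (h : ColumnInvariant c (k + 1) m) : ∃ m', ColumnInvariant c (k + 2) m' := by
  have hH : 1 ≤ hgt c (k + 2) := one_le_hgt hpos (by omega) hk
  have hH' : 1 ≤ hgt c (k + 1) := one_le_hgt hpos (by omega) (by omega)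
  have hsum : (c.take (k + 2)).sum = (c.take (k + 1)).sum + hgt c (k + 2) :=
    sum_take_eq_off_add_hgt (by omega) hk
  have hsum' := sum_take_eq_off_add_hgt (c := c) (j := k + 1) (by omega) (by omega)
  have htotal : (c.take (k + 2)).sum ≤ c.sum := by
    simpa using List.monotone_sum_take c hk
  have hm := h.le_sum_take
  have hcol := TinfCol_add_two hH h.filledUpTo (by omega) (by omega)
  have hprev_lt : ∀ i a, TinfCol c (k + 1) i = some a → colOf c a < k + 2 :=
    fun i a ha => Nat.lt_succ_of_le (h.colOf_le i a ha)
  refine ⟨_, ?_, hcol ▸ filledUpTo_propagatedCol hH h.filledUpTo, fun i a ha => ?_,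
    fun hii ha hb => ?_, fun j₀ hj₀ hj₀k i b hb => ?_⟩
  · split_ifs <;> omega
  · exact colOf_le_of_propagatedCol_eq_some (by omega) hk h.filledUpTo hprev_lt (hcol ▸ ha)
  · exact plt_of_propagatedCol_eq_some (by omega) hk h.filledUpTo hprev_lt h.plt_of_lt hii
      (hcol ▸ ha) (hcol ▸ hb)
  · rcases eq_or_lt_of_le hj₀k with rfl | hj₀k
    · exact Or.inr ⟨i, le_rfl, hb⟩
    rw [hcol] at hb
    rcases propagatedCol_eq_some h.filledUpTo hb with ⟨h1, h2, rfl⟩ | ⟨-, i₁, hi₁, -, hp⟩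
    · exact Or.inl (by rw [colOf_Tentry h1 h2 (by omega) hk]; exact hj₀k)
    · rcases h.mem_of_le j₀ hj₀ (by omega) i₁ b hp with hlt | ⟨i₀, hi₀, hp₀⟩
      · exact Or.inl hlt
      · exact Or.inr ⟨i₀, hi₀.trans hi₁, hp₀⟩

lemma ple_of_lt (hj : ColumnInvariant c j m) (hj' : ColumnInvariant c j' m') (hj1 : 1 ≤ j)
    (hjj' : j < j') {i a b : ℕ} (ha : TinfCol c j i = some a) (hb : TinfCol c j' i = some b) :
    ple c b a := by
  rcases hj'.mem_of_le j hj1 hjj'.le i b hb with hlt | ⟨i₀, hi₀, hp⟩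
  · exact Or.inl ((hj.colOf_le i a ha).trans_lt hlt)
  rcases eq_or_lt_of_le hi₀ with rfl | hi₀
  · obtain rfl : a = b := Option.some.inj (ha.symm.trans hp)
    exact Or.inr ⟨rfl, le_rfl⟩
  · rcases hj.plt_of_lt hi₀ hp ha with hlt | ⟨heq, hlt⟩
    · exact Or.inl hlt
    · exact Or.inr ⟨heq, hlt.le⟩

end ColumnInvariant

lemma exists_columnInvariant {c : List ℕ} (hpos : ∀ x ∈ c, 0 < x) {j : ℕ} (hj1 : 1 ≤ j)
    (hjl : j ≤ c.length) : ∃ m, ColumnInvariant c j m := by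
  induction j, hj1 using Nat.le_induction with
  | base => exact ⟨_, ColumnInvariant.one hjl⟩
  | succ k hk ih =>
    obtain ⟨k, rfl⟩ : ∃ k', k = k' + 1 := ⟨k - 1, by omega⟩
    obtain ⟨m, hm⟩ := ih (by omega)
    exact hm.succ hpos hjl

theorem statement0_general (n : ℕ) (c : List ℕ) (hc : IsComposition c n) :
    (∀ j i i' a b, 1 ≤ j → j ≤ c.length → 1 ≤ i → i < i' →
        TinfCol c j i = some a → TinfCol c j i' = some b → plt c a b) ∧
    (∀ i j j' a b, 1 ≤ j → j < j' → j' ≤ c.length → 1 ≤ i →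
        TinfCol c j i = some a → TinfCol c j' i = some b → ple c b a) ∧
    (∀ j i, 1 ≤ j → j ≤ c.length → 1 ≤ i →
        TinfCol c j i = none → TinfCol c j (i + 1) = none) := by
  have inv := fun j => exists_columnInvariant hc.2 (j := j)
  refine ⟨fun j i i' a b hj1 hjl _ hii ha hb => ?_, fun i j j' a b hj1 hjj' hj'l _ ha hb => ?_,
    fun j i hj1 hjl hi hnone => ?_⟩
  · obtain ⟨m, hm⟩ := inv j hj1 hjl
    exact hm.plt_of_lt hii ha hb
  · obtain ⟨m, hm⟩ := inv j hj1 (by omega)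
    obtain ⟨m', hm'⟩ := inv j' (by omega) hj'l
    exact hm.ple_of_lt hm' hj1 hjj' ha hb
  · obtain ⟨m, hm⟩ := inv j hj1 hjl
    exact hm.filledUpTo.succ_eq_none hi hnone

/-- the composition tableau `T(∞)` is semistandard for the order `≼`:
its entries strictly `≼`-increase down each column, weakly `≼`-decrease along each
row going from left to right, and no column of `T(∞)` contains a gap. -/
theorem statement0 (n : ℕ) (hn : 0 < n) (c : List ℕ) (hc : IsComposition c n) :
    (∀ j i i' a b, 1 ≤ j → j ≤ c.length → 1 ≤ i → i < i' →
        TinfCol c j i = some a → TinfCol c j i' = some b → plt c a b) ∧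
    (∀ i j j' a b, 1 ≤ j → j < j' → j' ≤ c.length → 1 ≤ i →
        TinfCol c j i = some a → TinfCol c j' i = some b → ple c b a) ∧
    (∀ j i, 1 ≤ j → j ≤ c.length → 1 ≤ i →
        TinfCol c j i = none → TinfCol c j (i + 1) = none) :=
  statement0_general n c hc
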